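/- arXiv:2501.15192 — 3 statements merged into one kernel-verified Lean document; each statement's English description precedes it below -/
import Mathlib

section
/- Let A be a deterministic finite automaton with Z ∈ LOOP_A and s ∈ Z, and suppose every state of A is reachable from s₀. If Z is not a terminal strongly connected component of A, then V_{(s,Z)}^ω is nowhere dense in the Cantor space X^ω. -/
open Set

/-- `w` is a finite prefix of the infinite word `ξ`. -/
def InfPrefix {X : Type*} (w : List X) (ξ : ℕ → X) : Prop :=
  ∀ i : Fin w.length, w.get i = ξ i.val

/-- The set of finite prefixes of elements of `F`. -/
def Pref {X : Type*} (F : Set (ℕ → X)) : Set (List X) :=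
  {w | ∃ ξ ∈ F, InfPrefix w ξ}

/-- Concatenation of a finite word in front of an infinite word. -/
def wordCat {X : Type*} (w : List X) (ξ : ℕ → X) : ℕ → X :=
  fun n => if h : n < w.length then w.get ⟨n, h⟩ else ξ (n - w.length)


/-- A deterministic automaton with initial state and transition function. -/
structure DetAuto (X S : Type*) where
  start : S
  step : S → X → S

/-- The extension of the transition function to finite words. -/
def DetAuto.run {X S : Type*} (A : DetAuto X S) (s : S) (w : List X) : S :=
  w.foldl A.step s

/-- The state reached after reading the first `n` letters of `ξ`. -/
def DetAuto.statesAt {X S : Type*} (A : DetAuto X S) (ξ : ℕ → X) (n : ℕ) : S :=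
  A.run A.start (List.ofFn fun i : Fin n => ξ i.val)

/-- `Inf(A, ξ)`: the set of states visited infinitely often on input `ξ`. -/
def AInf {X S : Type*} (A : DetAuto X S) (ξ : ℕ → X) : Set S :=
  {s | ∀ n : ℕ, ∃ m ≥ n, A.statesAt ξ m = s}

/-- Muller acceptance: `L(A, T)`. -/
def Lang {X S : Type*} (A : DetAuto X S) (T : Set (Set S)) : Set (ℕ → X) :=
  {ξ | AInf A ξ ∈ T}

/-- `LOOP_A`: the set of realizable infinity sets. -/
def Loops {X S : Type*} (A : DetAuto X S) : Set (Set S) :=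
  {Z | ∃ ξ : ℕ → X, AInf A ξ = Z}

/-- Strongly connected components: the loops maximal w.r.t. inclusion, i.e.
any other loop is contained in them or disjoint from them. -/
def IsSCC {X S : Type*} (A : DetAuto X S) (Z : Set S) : Prop :=
  Z ∈ Loops A ∧ ∀ Z' ∈ Loops A, Z' ⊆ Z ∨ Z' ∩ Z = ∅

/-- The relation `Z₁ ↦ Z₂`. -/
def ReachRel {X S : Type*} (A : DetAuto X S) (Z₁ Z₂ : Set S) : Prop :=
  Z₁ ≠ Z₂ ∧ ∃ s ∈ Z₁, ∃ w : List X, A.run s w ∈ Z₂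

/-- Terminal strongly connected components. -/
def IsTerminalSCC {X S : Type*} (A : DetAuto X S) (Z : Set S) : Prop :=
  IsSCC A Z ∧ ∀ Z' : Set S, IsSCC A Z' → Z ≠ Z' → ¬ ReachRel A Z Z'


/-- `v` is an `(s,Z)`-loop completing word. -/
def LoopCompleting {X S : Type*} (A : DetAuto X S) (s : S) (Z : Set S)
    (v : List X) : Prop :=
  v ≠ [] ∧ A.run s v = s ∧ {t | ∃ v' : List X, v' <+: v ∧ A.run s v' = t} = Z ∧
    ∀ v'' : List X, v'' <+: v → v'' ≠ v → A.run s v'' = s →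
      {t | ∃ v' : List X, v' <+: v'' ∧ A.run s v' = t} ≠ Z

/-- `V_{(s,Z)}`: the set of `(s,Z)`-loop completing words. -/
def Vloop {X S : Type*} (A : DetAuto X S) (s : S) (Z : Set S) : Set (List X) :=
  {v | LoopCompleting A s Z v}

/-- `V^ω`: infinite concatenations of non-empty words from `V`. -/
def omegaPow {X : Type*} (V : Set (List X)) : Set (ℕ → X) :=
  {ξ | ∃ f : ℕ → List X, (∀ n, f n ∈ V ∧ f n ≠ []) ∧
    ∀ n : ℕ, InfPrefix (((List.range n).map f).flatten) ξ}

/-!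
Every infinite concatenation of `(s,Z)`-loop completing words keeps the run started in `s`
inside `Z`, since each factor is a loop at `s` whose visited states are exactly `Z`. As `Z` is
a loop but not a terminal SCC, some state of `Z` has a way out of `Z`, and as all states of a
loop reach each other, every finite word `w` extends to a word `w e` with `δ(s, w e) ∉ Z`.
Hence the cylinder of `w e` misses `V^ω`: every cylinder contains a cylinder disjoint from `V^ω`.
-/

namespace DetAuto

variable {X S : Type*} (A : DetAuto X S)

lemma run_append (s : S) (w₁ w₂ : List X) :
    A.run s (w₁ ++ w₂) = A.run (A.run s w₁) w₂ :=
  List.foldl_append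

lemma statesAt_add (ξ : ℕ → X) (m k : ℕ) :
    A.statesAt ξ (m + k) = A.run (A.statesAt ξ m) (List.ofFn fun i : Fin k => ξ (m + i)) := by
  rw [statesAt, List.ofFn_add, run_append]
  rfl

end DetAuto

section Loops

variable {X S : Type*} {A : DetAuto X S} {Z : Set S}

lemma exists_run_eq_of_mem_loops (hZ : Z ∈ Loops A) {t₁ t₂ : S} (h₁ : t₁ ∈ Z)
    (h₂ : t₂ ∈ Z) : ∃ w : List X, A.run t₁ w = t₂ := by
  obtain ⟨ξ, rfl⟩ := hZ
  obtain ⟨m, -, rfl⟩ := h₁ 0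
  obtain ⟨m', hm', rfl⟩ := h₂ m
  obtain ⟨k, rfl⟩ := Nat.exists_eq_add_of_le hm'
  exact ⟨_, (A.statesAt_add ξ m k).symm⟩

lemma exists_run_notMem_of_not_isTerminalSCC (hZ : Z ∈ Loops A) (ht : ¬ IsTerminalSCC A Z) :
    ∃ s' ∈ Z, ∃ u : List X, A.run s' u ∉ Z := by
  by_cases hscc : IsSCC A Z
  · obtain ⟨Z', hZ', hne, -, s', hs', w, hw⟩ :
        ∃ Z', IsSCC A Z' ∧ Z ≠ Z' ∧ ReachRel A Z Z' := by
      simpa [IsTerminalSCC, hscc] using ht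
    rcases hZ'.2 Z hZ with hsub | hdisj
    · obtain ⟨r, hrZ', hrZ⟩ := Set.exists_of_ssubset (hsub.ssubset_of_ne hne)
      obtain ⟨w', hw'⟩ := exists_run_eq_of_mem_loops hZ'.1 hw hrZ'
      exact ⟨s', hs', w ++ w', by rwa [A.run_append, hw']⟩
    · exact ⟨s', hs', w, fun hwZ => hdisj.subset ⟨hwZ, hw⟩⟩
  · obtain ⟨Z', hZ', hnsub, t, htZ', htZ⟩ :
        ∃ Z' ∈ Loops A, ¬ Z' ⊆ Z ∧ (Z' ∩ Z).Nonempty := by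
      simpa [IsSCC, hZ, Set.nonempty_iff_ne_empty] using hscc
    obtain ⟨r, hrZ', hrZ⟩ := Set.not_subset.mp hnsub
    obtain ⟨w, hw⟩ := exists_run_eq_of_mem_loops hZ' htZ' hrZ'
    exact ⟨t, htZ, w, hw ▸ hrZ⟩

lemma exists_append_run_notMem (hZ : Z ∈ Loops A) {s' : S} (hs' : s' ∈ Z) {u : List X}
    (hu : A.run s' u ∉ Z) (s : S) (w : List X) : ∃ e : List X, A.run s (w ++ e) ∉ Z := by
  by_cases hw : A.run s w ∈ Z
  · obtain ⟨w', hw'⟩ := exists_run_eq_of_mem_loops hZ hw hs'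
    exact ⟨w' ++ u, by rwa [A.run_append, A.run_append, hw']⟩
  · exact ⟨[], by rwa [List.append_nil]⟩

end Loops

section Words

variable {X : Type*}

lemma InfPrefix.prefix_of_length_le {w w' : List X} {ξ : ℕ → X} (hw : InfPrefix w ξ)
    (hw' : InfPrefix w' ξ) (hlen : w.length ≤ w'.length) : w <+: w' := by
  rw [List.prefix_iff_eq_take]
  refine List.ext_getElem (by simpa using hlen) fun i hi hi' => ?_
  rw [List.getElem_take]
  exact (hw ⟨i, hi⟩).trans (hw' ⟨i, by omega⟩).symm

lemma InfPrefix.of_mem_cylinder {w : List X} {η ζ : ℕ → X} (hw : InfPrefix w η)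
    (hζ : ζ ∈ PiNat.cylinder η w.length) : InfPrefix w ζ :=
  fun i => (hw i).trans (hζ i i.isLt).symm

lemma infPrefix_wordCat (w : List X) (ξ : ℕ → X) : InfPrefix w (wordCat w ξ) := by
  intro i
  simp [wordCat]

lemma wordCat_ofFn_append_mem_cylinder (ξ : ℕ → X) (n : ℕ) (e : List X) (η : ℕ → X) :
    wordCat ((List.ofFn fun i : Fin n => ξ i) ++ e) η ∈ PiNat.cylinder ξ n := by
  intro i hi
  simp [wordCat, hi, Nat.lt_add_right _ hi, List.getElem_append_left]

lemma le_length_flatten_map_range {f : ℕ → List X} (hf : ∀ n, f n ≠ []) (m : ℕ) :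
    m ≤ ((List.range m).map f).flatten.length := by
  induction m with
  | zero => simp
  | succ m ih =>
    have := List.length_pos_iff.mpr (hf m)
    simp only [List.range_succ, List.map_append, List.map_cons, List.map_nil,
      List.flatten_append, List.flatten_cons, List.flatten_nil, List.append_nil,
      List.length_append]
    omega

end Words

lemma isNowhereDense_of_forall_exists_append_notMem_pref {X : Type*} [TopologicalSpace X]
    [DiscreteTopology X] {F : Set (ℕ → X)} (h : ∀ w : List X, ∃ e, w ++ e ∉ Pref F) :
    IsNowhereDense F := by
  refine Set.eq_empty_iff_forall_notMem.mpr fun ξ hξ => ?_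
  obtain ⟨_, ⟨x, n, rfl⟩, hξn, hsub⟩ :=
    (PiNat.isTopologicalBasis_cylinders fun _ => X).mem_nhds_iff.mp
      (isOpen_interior.mem_nhds hξ)
  rw [← PiNat.mem_cylinder_iff_eq.mp hξn] at hsub
  set w := List.ofFn fun i : Fin n => ξ i
  obtain ⟨e, he⟩ := h w
  set η := wordCat (w ++ e) ξ
  have hη : η ∈ closure F := interior_subset (hsub (wordCat_ofFn_append_mem_cylinder ξ n e ξ))
  obtain ⟨ζ, hζ, hζF⟩ := mem_closure_iff.mp hη _
    (PiNat.isOpen_cylinder _ η (w ++ e).length) (PiNat.self_mem_cylinder _ _)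
  exact he ⟨ζ, hζF, (infPrefix_wordCat _ ξ).of_mem_cylinder hζ⟩

section LoopCompleting

variable {X S : Type*} {A : DetAuto X S} {s : S} {Z : Set S}

lemma LoopCompleting.start_mem {v : List X} (hv : LoopCompleting A s Z v) : s ∈ Z :=
  hv.2.2.1 ▸ ⟨[], List.nil_prefix, rfl⟩

lemma run_mem_of_prefix_flatten (hs : s ∈ Z) {l : List (List X)}
    (hl : ∀ v ∈ l, v ∈ Vloop A s Z) {p : List X} (hp : p <+: l.flatten) :
    A.run s p ∈ Z := by
  induction l generalizing p with
  | nil =>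
    obtain rfl := List.prefix_nil.mp hp
    exact hs
  | cons v l ih =>
    have hv : LoopCompleting A s Z v := hl v List.mem_cons_self
    rw [List.flatten_cons] at hp
    rcases List.prefix_or_prefix_of_prefix hp (List.prefix_append v _) with hpv | ⟨t, rfl⟩
    · exact hv.2.2.1 ▸ ⟨p, hpv, rfl⟩
    · rw [A.run_append, hv.2.1]
      exact ih (fun u hu => hl u (List.mem_cons_of_mem v hu))
        ((List.prefix_append_right_inj v).mp hp)

lemma run_mem_of_mem_pref_omegaPow_vloop {w : List X}
    (hw : w ∈ Pref (omegaPow (Vloop A s Z))) : A.run s w ∈ Z := by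
  obtain ⟨ξ, ⟨f, hf, hfξ⟩, hwξ⟩ := hw
  have hlen := le_length_flatten_map_range (fun n => (hf n).2) w.length
  refine run_mem_of_prefix_flatten (hf 0).1.start_mem ?_
    (hwξ.prefix_of_length_le (hfξ _) hlen)
  simpa using fun n _ => (hf n).1

end LoopCompleting

theorem omegaPow_vloop_nowhereDense_general {X S : Type*}
    [TopologicalSpace X] [DiscreteTopology X]
    (A : DetAuto X S) (Z : Set S) (s : S) (hZ : Z ∈ Loops A)
    (ht : ¬ IsTerminalSCC A Z) :
    IsNowhereDense (omegaPow (Vloop A s Z)) := by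
  obtain ⟨s', hs', u, hu⟩ := exists_run_notMem_of_not_isTerminalSCC hZ ht
  refine isNowhereDense_of_forall_exists_append_notMem_pref fun w => ?_
  obtain ⟨e, he⟩ := exists_append_run_notMem hZ hs' hu s w
  exact ⟨e, fun hwe => he (run_mem_of_mem_pref_omegaPow_vloop hwe)⟩

/-- If every state is reachable and Z ∈ LOOP_A is not a terminal SCC,
then V_{(s,Z)}^ω is nowhere dense. -/
theorem omegaPow_vloop_nowhereDense {X S : Type*} [Fintype X] [Fintype S]
    [TopologicalSpace X] [DiscreteTopology X]
    (A : DetAuto X S) (Z : Set S) (s : S) (hZ : Z ∈ Loops A) (hs : s ∈ Z)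
    (hreach : ∀ t : S, ∃ u : List X, A.run A.start u = t)
    (ht : ¬ IsTerminalSCC A Z) :
    IsNowhereDense (omegaPow (Vloop A s Z)) :=
  omegaPow_vloop_nowhereDense_general A Z s hZ ht
end

section
/- In the Cantor space {a,b}^ω, the ω-language F = {a,b}^*·a^ω (all words with a tail of a's) is dense, and there exist no open set E ⊆ {a,b}^ω and no Π₂-set (Gδ-set) F' of first Baire category with F Δ E ⊆ F'. -/
open Set

private lemma F_dense : Dense {ξ : ℕ → Bool | ∃ n : ℕ, ∀ m ≥ n, ξ m = true} := by
  intro x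
  rw [mem_closure_iff]
  intro o ho hx
  obtain ⟨I, u, hu, hsub⟩ := isOpen_pi_iff.1 ho x hx
  refine ⟨fun n => if n ∈ I then x n else true, ?_, ?_⟩
  · apply hsub
    intro i hi
    show (if i ∈ I then x i else true) ∈ u i
    rw [if_pos (Finset.mem_coe.1 hi)]
    exact (hu i (Finset.mem_coe.1 hi)).2
  · refine ⟨(I.sup id) + 1, fun m hm => ?_⟩
    show (if m ∈ I then x m else true) = true
    rw [if_neg]
    intro hmI
    have := Finset.le_sup (f := id) hmI
    simp only [id] at this
    omega

private lemma F_meagre : IsMeagre {ξ : ℕ → Bool | ∃ n : ℕ, ∀ m ≥ n, ξ m = true} := by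
  have heq : {ξ : ℕ → Bool | ∃ n : ℕ, ∀ m ≥ n, ξ m = true} =
      ⋃ n : ℕ, {ξ : ℕ → Bool | ∀ m ≥ n, ξ m = true} := by
    ext ξ; simp [mem_iUnion]
  rw [heq]
  apply isMeagre_iUnion
  intro n
  set S : Set (ℕ → Bool) := {ξ : ℕ → Bool | ∀ m ≥ n, ξ m = true} with hS
  have hclosed : IsClosed S := by
    have : S = ⋂ m ∈ {m | m ≥ n}, (fun ξ : ℕ → Bool => ξ m) ⁻¹' {true} := by
      ext ξ; simp [hS]
    rw [this]
    exact isClosed_biInter fun m _ => (isClosed_discrete _).preimage (continuous_apply m)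
  have hint : interior S = ∅ := by
    by_contra h
    obtain ⟨x, hx⟩ := nonempty_iff_ne_empty.2 h
    obtain ⟨I, u, hu, hsub⟩ := isOpen_pi_iff.1 isOpen_interior x hx
    set M : ℕ := max ((I.sup id) + 1) n with hM
    have hMI : M ∉ I := by
      intro hMI
      have := Finset.le_sup (f := id) hMI
      simp only [id] at this
      omega
    set y : ℕ → Bool := Function.update x M false with hy
    have hyS : y ∈ S := interior_subset <| hsub fun i hi => by
      have : y i = x i := Function.update_of_ne (by rintro rfl; exact hMI hi) _ _
      rw [this]; exact (hu i hi).2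
    have : y M = true := hyS M (le_max_right _ _)
    simp [hy, Function.update_self] at this
  -- closed with empty interior ⇒ meagre
  rw [IsMeagre]
  rw [mem_residual]
  exact ⟨Sᶜ, subset_rfl, hclosed.isOpen_compl.isGδ,
    interior_eq_empty_iff_dense_compl.1 hint⟩

/-- In {a,b}^ω the set F = {a,b}^*·a^ω is dense, and no open set E and
meagre Gδ-set F' satisfy F Δ E ⊆ F'. -/
theorem no_Pi2_baire_witness :
    Dense {ξ : ℕ → Bool | ∃ n : ℕ, ∀ m ≥ n, ξ m = true} ∧
    ¬ ∃ (E F' : Set (ℕ → Bool)), IsOpen E ∧ IsGδ F' ∧ IsMeagre F' ∧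
        symmDiff {ξ : ℕ → Bool | ∃ n : ℕ, ∀ m ≥ n, ξ m = true} E ⊆ F' := by
  refine ⟨F_dense, ?_⟩
  rintro ⟨E, F', hE, hGδ, hmeagre, hsub⟩
  set F : Set (ℕ → Bool) := {ξ : ℕ → Bool | ∃ n : ℕ, ∀ m ≥ n, ξ m = true} with hFdef
  -- E ⊆ F ∪ F', which is meagre, so E is meagre, hence empty (being open)
  have hEsub : E ⊆ F ∪ F' := by
    intro x hx
    by_cases hxF : x ∈ F
    · exact Or.inl hxF
    · exact Or.inr (hsub (mem_symmDiff.2 (Or.inr ⟨hx, hxF⟩)))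
  have hunion : IsMeagre (F ∪ F') := by
    rw [IsMeagre, compl_union]
    exact Filter.inter_mem F_meagre hmeagre
  have hEmeagre : IsMeagre E := hunion.mono hEsub
  have hEempty : E = ∅ := by
    by_contra h
    obtain ⟨x, hx⟩ := nonempty_iff_ne_empty.2 h
    have hd : Dense Eᶜ := dense_of_mem_residual hEmeagre
    obtain ⟨y, hy1, hy2⟩ := hd.inter_open_nonempty E hE ⟨x, hx⟩
    exact hy2 hy1
  -- hence F ⊆ F'
  have hFF' : F ⊆ F' := by
    intro x hx
    exact hsub (mem_symmDiff.2 (Or.inl ⟨hx, by rw [hEempty]; exact notMem_empty x⟩))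
  -- F' is a dense Gδ, hence residual, contradicting its meagreness
  have hF'res : F' ∈ residual (ℕ → Bool) :=
    mem_residual.2 ⟨F', subset_rfl, hGδ, F_dense.mono hFF'⟩
  have : Dense (F' ∩ F'ᶜ) := dense_of_mem_residual (Filter.inter_mem hF'res hmeagre)
  rw [inter_compl_self] at this
  obtain ⟨y, hy⟩ := this.nonempty
  exact hy
end

section
/- Let A = (X, S, s₀, δ) be a deterministic finite automaton and T ⊆ 2^S a table all of whose loops are maximal (i.e., every Z ∈ T ∩ LOOP_A is a strongly connected component). Then there exists a deterministic Büchi automaton (A', T') with at most O(|S|²) states such that L(A, T) = {ξ : Inf(A', ξ) ∩ T' ≠ ∅}. -/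
open Set

/-! Since the loops of `T` are strongly connected components, two of them are equal or disjoint,
and an infinity set meeting one of them is contained in it. Hence `Inf(A, ξ) ∈ T` iff the run
eventually stays inside a loop `Z ∈ T` and visits every state of `Z` infinitely often. The latter is
checked by a counter modulo `|S|` that runs through an enumeration of `S`, waiting at each index
until the corresponding state is visited and skipping the states outside the current loop; the
Büchi condition asks that the counter wraps around infinitely often inside a loop of `T`. -/

open Filter

section StepSequences

variable {α : Type*} {f : ℕ → α} {p : ℕ → Prop}

theorem eq_of_forall_Ico_not (hf : ∀ t, ¬ p t → f (t + 1) = f t) {t₀ t : ℕ} (ht : t₀ ≤ t)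
    (hp : ∀ s, t₀ ≤ s → s < t → ¬ p s) : f t = f t₀ := by
  induction t, ht using Nat.le_induction with
  | base => rfl
  | succ t ht ih =>
    rw [hf t (hp t ht t.lt_succ_self), ih fun s hs hst => hp s hs (by omega)]

theorem exists_ge_eq_and_of_frequently (hf : ∀ t, ¬ p t → f (t + 1) = f t)
    (hp : ∃ᶠ t in atTop, p t) (t₀ : ℕ) : ∃ t ≥ t₀, f t = f t₀ ∧ p t := by
  classical
  have hex : ∃ t, t₀ ≤ t ∧ p t := frequently_atTop.1 hp t₀
  obtain ⟨ht₀, hpt⟩ := Nat.find_spec hex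
  refine ⟨Nat.find hex, ht₀, eq_of_forall_Ico_not hf ht₀ fun s hs hst hps => ?_, hpt⟩
  exact Nat.find_min hex hst ⟨hs, hps⟩

open Fin.NatCast in
theorem frequently_eq_and_of_frequently {n : ℕ} [NeZero n] [DecidablePred p] {f : ℕ → Fin n}
    (hf : ∀ t, f (t + 1) = if p t then f t + 1 else f t) (hp : ∃ᶠ t in atTop, p t) (c : Fin n) :
    ∃ᶠ t in atTop, f t = c ∧ p t := by
  have hconst : ∀ t, ¬ p t → f (t + 1) = f t := fun t ht => by rw [hf, if_neg ht]
  have hsucc : ∀ k : ℕ, ∀ t₀, ∃ t ≥ t₀, f t = f t₀ + k ∧ p t := by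
    intro k
    induction k with
    | zero => simpa using exists_ge_eq_and_of_frequently hconst hp
    | succ k ih =>
      intro t₀
      obtain ⟨t, ht, hft, hpt⟩ := ih t₀
      obtain ⟨t', ht', hft', hpt'⟩ := exists_ge_eq_and_of_frequently hconst hp (t + 1)
      refine ⟨t', by omega, ?_, hpt'⟩
      rw [hft', hf, if_pos hpt, hft, Nat.cast_succ, add_assoc]
  refine frequently_atTop.2 fun t₀ => ?_
  simpa using hsucc (c - f t₀).val t₀

end StepSequences

namespace DetAuto

variable {X S : Type*} (A : DetAuto X S) (ξ : ℕ → X)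

theorem statesAt_succ (m : ℕ) : A.statesAt ξ (m + 1) = A.step (A.statesAt ξ m) (ξ m) := by
  rw [statesAt, statesAt, run, run, List.ofFn_succ']
  simp

theorem mem_AInf_iff {s : S} : s ∈ AInf A ξ ↔ ∃ᶠ m in atTop, A.statesAt ξ m = s :=
  frequently_atTop.symm

theorem AInf_mem_Loops : AInf A ξ ∈ Loops A := ⟨ξ, rfl⟩

variable {S' : Type*}

def mapEquiv (e : S ≃ S') : DetAuto X S' where
  start := e A.start
  step s x := e (A.step (e.symm s) x)

theorem mapEquiv_statesAt (e : S ≃ S') (m : ℕ) :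
    (A.mapEquiv e).statesAt ξ m = e (A.statesAt ξ m) := by
  induction m with
  | zero => rfl
  | succ m ih => rw [statesAt_succ, statesAt_succ, ih]; exact congrArg e (by simp)

theorem AInf_mapEquiv (e : S ≃ S') :
    AInf (A.mapEquiv e) ξ = e '' AInf A ξ := by
  ext s
  simp only [e.image_eq_preimage_symm, Set.mem_preimage, mem_AInf_iff, mapEquiv_statesAt,
    ← e.eq_symm_apply]

variable [Finite S]

theorem AInf_inter_nonempty_iff {F : Set S} :
    (AInf A ξ ∩ F).Nonempty ↔ ∃ᶠ m in atTop, A.statesAt ξ m ∈ F := by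
  simp only [Set.Nonempty, Set.mem_inter_iff, mem_AInf_iff]
  constructor
  · rintro ⟨s, hs, hsF⟩
    exact hs.mono fun m hm => hm ▸ hsF
  · intro h
    obtain ⟨s, hs⟩ := frequently_exists.1
      (h.mono fun m hm => (⟨_, rfl, hm⟩ : ∃ s, A.statesAt ξ m = s ∧ s ∈ F))
    exact ⟨s, hs.mono fun m hm => hm.1, hs.exists.elim fun m hm => hm.1 ▸ hm.2⟩

theorem eventually_mem_AInf : ∀ᶠ m in atTop, A.statesAt ξ m ∈ AInf A ξ := by
  have : ∀ s : S, ∀ᶠ m in atTop, s ∉ AInf A ξ → A.statesAt ξ m ≠ s := fun s => by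
    by_cases hs : s ∈ AInf A ξ
    · exact Eventually.of_forall fun _ h => absurd hs h
    · exact ((not_frequently.1 ((mem_AInf_iff A ξ).not.1 hs))).mono fun _ hm _ => hm
  filter_upwards [eventually_all.2 this] with m hm
  by_contra h
  exact hm _ h rfl

end DetAuto

section Components

variable {X S : Type*} {A : DetAuto X S} {T : Set (Set S)} {Z : Set S} {s : S}

theorem IsSCC.subset_of_mem_Loops (hZ : IsSCC A Z) {L : Set S} (hL : L ∈ Loops A) (hsL : s ∈ L)
    (hsZ : s ∈ Z) : L ⊆ Z :=
  (hZ.2 L hL).resolve_right (Set.nonempty_iff_ne_empty.1 ⟨s, hsL, hsZ⟩)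

theorem IsSCC.eq_of_mem {Z' : Set S} (hZ : IsSCC A Z) (hZ' : IsSCC A Z') (hs : s ∈ Z)
    (hs' : s ∈ Z') : Z = Z' :=
  (hZ'.subset_of_mem_Loops hZ.1 hs hs').antisymm (hZ.subset_of_mem_Loops hZ'.1 hs' hs)

namespace DetAuto

variable (A T) in
open Classical in
/-- The loop of `T` containing `s`, or `∅` if there is none; it is well defined when all loops of
`T` are strongly connected components, as these are pairwise disjoint. -/
noncomputable def loopOf (s : S) : Set S :=
  if h : ∃ Z ∈ T, Z ∈ Loops A ∧ s ∈ Z then h.choose else ∅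

theorem loopOf_spec {z : S} (hz : z ∈ loopOf A T s) :
    loopOf A T s ∈ T ∧ loopOf A T s ∈ Loops A ∧ s ∈ loopOf A T s := by
  unfold loopOf at hz ⊢
  split_ifs at hz ⊢ with h
  · exact h.choose_spec
  · exact absurd hz (Set.notMem_empty z)

theorem loopOf_eq (hT : ∀ Z ∈ T, Z ∈ Loops A → IsSCC A Z) (hZT : Z ∈ T) (hZL : Z ∈ Loops A)
    (hs : s ∈ Z) : loopOf A T s = Z := by
  have h : ∃ Z ∈ T, Z ∈ Loops A ∧ s ∈ Z := ⟨Z, hZT, hZL, hs⟩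
  obtain ⟨hT', hL', hs'⟩ := h.choose_spec
  rw [loopOf, dif_pos h]
  exact (hT _ hT' hL').eq_of_mem (hT Z hZT hZL) hs' hs

theorem eventually_loopOf_eq [Finite S] (hT : ∀ Z ∈ T, Z ∈ Loops A → IsSCC A Z) (hZT : Z ∈ T)
    (hZL : Z ∈ Loops A) {ξ : ℕ → X} (h : AInf A ξ ⊆ Z) :
    ∀ᶠ m in atTop, loopOf A T (A.statesAt ξ m) = Z :=
  (A.eventually_mem_AInf ξ).mono fun _ hm => loopOf_eq hT hZT hZL (h hm)

end DetAuto

end Components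

namespace DetAuto

variable {X S : Type*} [Fintype S] [NeZero (Fintype.card S)] (A : DetAuto X S) (T : Set (Set S))

/-- The counter value `c` of the Büchi automaton waits for a visit of the `c`-th state, and moves
on as soon as that state is the current one or does not lie in the current loop of `T`. -/
def Advances (q : S × Fin (Fintype.card S)) : Prop :=
  (Fintype.equivFin S).symm q.2 = q.1 ∨ (Fintype.equivFin S).symm q.2 ∉ loopOf A T q.1

open Classical in
noncomputable def buchi : DetAuto X (S × Fin (Fintype.card S)) where
  start := (A.start, 0)
  step q x := (A.step q.1 x, if Advances A T q then q.2 + 1 else q.2)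

def buchiAccept : Set (S × Fin (Fintype.card S)) :=
  {q | q.2 = 0 ∧ Advances A T q ∧ q.1 ∈ loopOf A T q.1}

variable {A T} {ξ : ℕ → X}

theorem buchi_statesAt_fst (m : ℕ) : ((A.buchi T).statesAt ξ m).1 = A.statesAt ξ m := by
  induction m with
  | zero => rfl
  | succ m ih => rw [statesAt_succ, statesAt_succ, ← ih]; rfl

open Classical in
theorem buchi_statesAt_snd_succ (m : ℕ) :
    ((A.buchi T).statesAt ξ (m + 1)).2 =
      if Advances A T ((A.buchi T).statesAt ξ m) then ((A.buchi T).statesAt ξ m).2 + 1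
      else ((A.buchi T).statesAt ξ m).2 := by
  rw [statesAt_succ]; rfl

theorem mem_AInf_of_mem_AInf_buchi {q : S × Fin (Fintype.card S)} (hq : q ∈ AInf (A.buchi T) ξ) :
    q.1 ∈ AInf A ξ :=
  (A.mem_AInf_iff ξ).2 <| ((mem_AInf_iff _ ξ).1 hq).mono fun m hm => by
    rw [← buchi_statesAt_fst, hm]

variable (hT : ∀ Z ∈ T, Z ∈ Loops A → IsSCC A Z)
include hT

theorem frequently_advances_buchi (h : AInf A ξ ∈ T) :
    ∃ᶠ m in atTop, Advances A T ((A.buchi T).statesAt ξ m) := by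
  intro hstuck
  obtain ⟨N, hN⟩ := eventually_atTop.1
    (hstuck.and (eventually_loopOf_eq hT h (A.AInf_mem_Loops ξ) subset_rfl))
  have hconst : ∀ m ≥ N, ((A.buchi T).statesAt ξ m).2 = ((A.buchi T).statesAt ξ N).2 :=
    fun m hm => eq_of_forall_Ico_not (f := fun m => ((A.buchi T).statesAt ξ m).2)
      (fun t ht => by rw [buchi_statesAt_snd_succ, if_neg ht]) hm fun t ht _ => (hN t ht).1
  let z := (Fintype.equivFin S).symm ((A.buchi T).statesAt ξ N).2
  have hz : z ∈ AInf A ξ := by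
    have := (not_or.1 (hN N le_rfl).1).2
    rw [buchi_statesAt_fst, (hN N le_rfl).2] at this
    exact not_not.1 this
  obtain ⟨m, hm, hmz⟩ := hz N
  apply (not_or.1 (hN m hm).1).1
  rw [hconst m hm, buchi_statesAt_fst, hmz]

open Classical Fin.NatCast in
theorem frequently_mem_buchiAccept (h : AInf A ξ ∈ T) :
    ∃ᶠ m in atTop, (A.buchi T).statesAt ξ m ∈ buchiAccept A T := by
  have hzero := frequently_eq_and_of_frequently (f := fun m => ((A.buchi T).statesAt ξ m).2)
    buchi_statesAt_snd_succ (frequently_advances_buchi hT h) 0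
  refine (hzero.and_eventually ((eventually_loopOf_eq hT h (A.AInf_mem_Loops ξ) subset_rfl).and
    (A.eventually_mem_AInf ξ))).mono fun m ⟨⟨h0, hadv⟩, hloop, hmem⟩ => ⟨h0, hadv, ?_⟩
  rw [buchi_statesAt_fst, hloop]
  exact hmem

open Classical in
theorem AInf_mem_of_buchiAccept (h : (AInf (A.buchi T) ξ ∩ buchiAccept A T).Nonempty) :
    AInf A ξ ∈ T := by
  obtain ⟨q, hq, -, hadv, hqZ⟩ := h
  obtain ⟨hZT, hZL, -⟩ := loopOf_spec hqZ
  have hsub : AInf A ξ ⊆ loopOf A T q.1 :=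
    (hT _ hZT hZL).subset_of_mem_Loops (A.AInf_mem_Loops ξ) (mem_AInf_of_mem_AInf_buchi hq) hqZ
  suffices loopOf A T q.1 ⊆ AInf A ξ by rwa [hsub.antisymm this]
  intro z hz
  have hfreq : ∃ᶠ m in atTop, Advances A T ((A.buchi T).statesAt ξ m) :=
    ((mem_AInf_iff _ ξ).1 hq).mono fun m hm => hm ▸ hadv
  have hvisit := frequently_eq_and_of_frequently (f := fun m => ((A.buchi T).statesAt ξ m).2)
    buchi_statesAt_snd_succ hfreq (Fintype.equivFin S z)
  refine (A.mem_AInf_iff ξ).2 <| (hvisit.and_eventually (eventually_loopOf_eq hT hZT hZL hsub)).mono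
    fun m ⟨⟨hc, hadv⟩, hloop⟩ => ?_
  simp only [Advances, hc, Equiv.symm_apply_apply, buchi_statesAt_fst, hloop] at hadv
  exact (hadv.resolve_right (not_not.2 hz)).symm

theorem Lang_eq_buchi :
    Lang A T = {ξ : ℕ → X | (AInf (A.buchi T) ξ ∩ buchiAccept A T).Nonempty} := by
  ext ξ
  exact ⟨fun h => ((A.buchi T).AInf_inter_nonempty_iff ξ).2 (frequently_mem_buchiAccept hT h),
    AInf_mem_of_buchiAccept hT⟩

end DetAuto

theorem muller_to_buchi_general {X S : Type*} [Fintype S]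
    (A : DetAuto X S) (T : Set (Set S))
    (hT : ∀ Z ∈ T, Z ∈ Loops A → IsSCC A Z) :
    ∃ (S' : Type) (_ : Fintype S') (A' : DetAuto X S') (T' : Set S'),
      Fintype.card S' ≤ Fintype.card S * (Fintype.card S + 1) ∧
      Lang A T = {ξ : ℕ → X | (AInf A' ξ ∩ T').Nonempty} := by
  have : Nonempty S := ⟨A.start⟩
  let e := (Fintype.equivFin S).prodCongr (Equiv.refl (Fin (Fintype.card S)))
  refine ⟨_, inferInstance, (A.buchi T).mapEquiv e, e '' DetAuto.buchiAccept A T, ?_, ?_⟩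
  · simpa using Nat.mul_le_mul_left _ (Nat.le_succ _)
  · simp only [DetAuto.Lang_eq_buchi hT, DetAuto.AInf_mapEquiv, ← Set.image_inter e.injective,
      Set.image_nonempty]

/-- Muller to Büchi conversion with a quadratic bound, for tables all of
whose loops are maximal (i.e. strongly connected components). -/
theorem muller_to_buchi {X S : Type*} [Fintype X] [Fintype S]
    (A : DetAuto X S) (T : Set (Set S))
    (hT : ∀ Z ∈ T, Z ∈ Loops A → IsSCC A Z) :
    ∃ (S' : Type) (_ : Fintype S') (A' : DetAuto X S') (T' : Set S'),
      Fintype.card S' ≤ Fintype.card S * (Fintype.card S + 1) ∧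
      Lang A T = {ξ : ℕ → X | (AInf A' ξ ∩ T').Nonempty} :=
  muller_to_buchi_general A T hT
end
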